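/- arXiv:2503.16343 — 7 statements merged into one kernel-verified Lean document; each statement's English description precedes it below -/
import Mathlib

section
/- The monoid SL(2, ℕ₀) of 2×2 matrices with nonnegative integer entries and determinant 1 is freely generated by T = [[1,1],[0,1]] and V = [[1,0],[1,1]]: every element of SL(2, ℕ₀) can be written uniquely as a word in T and V. -/
/-- The matrix `T = [[1,1],[0,1]]`. -/
def Tmat : Matrix (Fin 2) (Fin 2) ℤ := !![1, 1; 0, 1]

/-- The matrix `V = [[1,0],[1,1]]`. -/
def Vmat : Matrix (Fin 2) (Fin 2) ℤ := !![1, 0; 1, 1]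

def wprod (w : List Bool) : Matrix (Fin 2) (Fin 2) ℤ :=
  (w.map (fun x => if x then Tmat else Vmat)).prod

lemma wprod_nil : wprod [] = 1 := rfl

lemma wprod_cons (b : Bool) (w : List Bool) :
    wprod (b :: w) = (if b then Tmat else Vmat) * wprod w := by
  simp [wprod]

lemma Tmul (A : Matrix (Fin 2) (Fin 2) ℤ) :
    Tmat * A = !![A 0 0 + A 1 0, A 0 1 + A 1 1; A 1 0, A 1 1] := by
  ext i j
  fin_cases i <;> fin_cases j <;>
    simp [Tmat, Matrix.mul_apply, Fin.sum_univ_two]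

lemma Vmul (A : Matrix (Fin 2) (Fin 2) ℤ) :
    Vmat * A = !![A 0 0, A 0 1; A 0 0 + A 1 0, A 0 1 + A 1 1] := by
  ext i j
  fin_cases i <;> fin_cases j <;>
    simp [Vmat, Matrix.mul_apply, Fin.sum_univ_two]

lemma wprod_nonneg (w : List Bool) : ∀ i j, 0 ≤ wprod w i j := by
  induction w with
  | nil => intro i j; fin_cases i <;> fin_cases j <;> simp [wprod_nil]
  | cons b t ih =>
    intro i j
    rw [wprod_cons]
    have h00 := ih 0 0; have h01 := ih 0 1; have h10 := ih 1 0; have h11 := ih 1 1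
    cases b <;> fin_cases i <;> fin_cases j <;> simp [Tmul, Vmul] <;> omega

lemma wprod_det (w : List Bool) : (wprod w).det = 1 := by
  induction w with
  | nil => simp [wprod_nil]
  | cons b t ih =>
    rw [wprod_cons, Matrix.det_mul, ih]
    cases b <;> simp [Tmat, Vmat, Matrix.det_fin_two_of]

lemma wprod_cons_true (w : List Bool) : wprod (true :: w) = Tmat * wprod w := by
  rw [wprod_cons]; rfl

lemma wprod_cons_false (w : List Bool) : wprod (false :: w) = Vmat * wprod w := by
  rw [wprod_cons]; rfl

lemma T_cancel {A B : Matrix (Fin 2) (Fin 2) ℤ} (h : Tmat * A = Tmat * B) : A = B := by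
  have hT : (!![1,-1;0,1] : Matrix (Fin 2) (Fin 2) ℤ) * Tmat = 1 := by
    ext i j
    fin_cases i <;> fin_cases j <;>
      simp [Tmat, Matrix.mul_apply, Fin.sum_univ_two, Matrix.one_apply]
  have h2 := congrArg (fun X => (!![1,-1;0,1] : Matrix (Fin 2) (Fin 2) ℤ) * X) h
  simp only [← mul_assoc, hT, one_mul] at h2
  exact h2

lemma V_cancel {A B : Matrix (Fin 2) (Fin 2) ℤ} (h : Vmat * A = Vmat * B) : A = B := by
  have hV : (!![1,0;-1,1] : Matrix (Fin 2) (Fin 2) ℤ) * Vmat = 1 := by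
    ext i j
    fin_cases i <;> fin_cases j <;>
      simp [Vmat, Matrix.mul_apply, Fin.sum_univ_two, Matrix.one_apply]
  have h2 := congrArg (fun X => (!![1,0;-1,1] : Matrix (Fin 2) (Fin 2) ℤ) * X) h
  simp only [← mul_assoc, hV, one_mul] at h2
  exact h2

lemma wprod_cons_ne_one (b : Bool) (t : List Bool) : wprod (b :: t) ≠ 1 := by
  intro h
  have hn00 := wprod_nonneg t 0 0
  have hn01 := wprod_nonneg t 0 1
  have hn10 := wprod_nonneg t 1 0
  have hn11 := wprod_nonneg t 1 1
  cases b
  · rw [wprod_cons_false, Vmul] at h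
    have e1 := congrFun (congrFun h 0) 0
    have e2 := congrFun (congrFun h 1) 0
    simp [Matrix.one_apply] at e1 e2
    omega
  · rw [wprod_cons_true, Tmul] at h
    have e1 := congrFun (congrFun h 0) 1
    have e2 := congrFun (congrFun h 1) 1
    simp [Matrix.one_apply] at e1 e2
    omega

lemma word_inj : ∀ w1 w2 : List Bool, wprod w1 = wprod w2 → w1 = w2 := by
  intro w1
  induction w1 with
  | nil =>
    intro w2 h
    cases w2 with
    | nil => rfl
    | cons b t => exact absurd (h.symm.trans wprod_nil) (wprod_cons_ne_one b t)
  | cons b1 t1 ih =>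
    intro w2 h
    cases w2 with
    | nil => exact absurd (h.trans wprod_nil) (wprod_cons_ne_one b1 t1)
    | cons b2 t2 =>
      have hmix : ∀ A B : Matrix (Fin 2) (Fin 2) ℤ, (∀ i j, 0 ≤ A i j) → A.det = 1 →
          (∀ i j, 0 ≤ B i j) → Tmat * A ≠ Vmat * B := by
        intro A B hA hdA hB h
        rw [Tmul, Vmul] at h
        have e00 := congrFun (congrFun h 0) 0
        have e01 := congrFun (congrFun h 0) 1
        have e10 := congrFun (congrFun h 1) 0
        have e11 := congrFun (congrFun h 1) 1
        simp at e00 e01 e10 e11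
        have hA00 : A 0 0 = 0 := by
          have := hB 1 0; have := hA 0 0; have := hA 1 0; omega
        have hA01 : A 0 1 = 0 := by
          have := hB 1 1; have := hA 0 1; have := hA 1 1; omega
        rw [Matrix.det_fin_two, hA00, hA01] at hdA
        simp at hdA
      cases b1 <;> cases b2
      · rw [wprod_cons_false, wprod_cons_false] at h
        rw [ih t2 (V_cancel h)]
      · rw [wprod_cons_false, wprod_cons_true] at h
        exact absurd h.symm
          (hmix _ _ (wprod_nonneg t2) (wprod_det t2) (wprod_nonneg t1))
      · rw [wprod_cons_true, wprod_cons_false] at h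
        exact absurd h
          (hmix _ _ (wprod_nonneg t1) (wprod_det t1) (wprod_nonneg t2))
      · rw [wprod_cons_true, wprod_cons_true] at h
        rw [ih t2 (T_cancel h)]

lemma exists_word : ∀ n : ℕ, ∀ M : Matrix (Fin 2) (Fin 2) ℤ,
    (∀ i j, 0 ≤ M i j) → M.det = 1 →
    (M 0 0 + M 0 1 + M 1 0 + M 1 1).toNat = n → ∃ w, wprod w = M := by
  intro n
  induction n using Nat.strong_induction_on with
  | _ n ih =>
  intro M hpos hdet hsum
  have h00 := hpos 0 0
  have h01 := hpos 0 1
  have h10 := hpos 1 0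
  have h11 := hpos 1 1
  rw [Matrix.det_fin_two] at hdet
  by_cases hT : M 1 0 ≤ M 0 0 ∧ M 1 1 ≤ M 0 1
  · -- T case
    have hcd : 0 < M 1 0 + M 1 1 := by
      by_contra hc
      have hc1 : M 1 0 = 0 := by omega
      have hc2 : M 1 1 = 0 := by omega
      rw [hc1, hc2] at hdet; simp at hdet
    set A : Matrix (Fin 2) (Fin 2) ℤ :=
      !![M 0 0 - M 1 0, M 0 1 - M 1 1; M 1 0, M 1 1] with hAdef
    have hApos : ∀ i j, 0 ≤ A i j := by
      intro i j; fin_cases i <;> fin_cases j <;> simp [hAdef] <;> omega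
    have hAdet : A.det = 1 := by
      rw [Matrix.det_fin_two_of]; linear_combination hdet
    have hlt : (A 0 0 + A 0 1 + A 1 0 + A 1 1).toNat < n := by
      have e : A 0 0 + A 0 1 + A 1 0 + A 1 1 = M 0 0 + M 0 1 := by
        simp [hAdef]; ring
      omega
    obtain ⟨w, hw⟩ := ih _ hlt A hApos hAdet rfl
    refine ⟨true :: w, ?_⟩
    rw [wprod_cons_true, hw, Tmul]
    rw [Matrix.eta_fin_two M]
    congr 1 <;> simp [hAdef] <;> ring
  by_cases hV : M 0 0 ≤ M 1 0 ∧ M 0 1 ≤ M 1 1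
  · -- V case
    have hab : 0 < M 0 0 + M 0 1 := by
      by_contra hc
      have hc1 : M 0 0 = 0 := by omega
      have hc2 : M 0 1 = 0 := by omega
      rw [hc1, hc2] at hdet; simp at hdet
    set A : Matrix (Fin 2) (Fin 2) ℤ :=
      !![M 0 0, M 0 1; M 1 0 - M 0 0, M 1 1 - M 0 1] with hAdef
    have hApos : ∀ i j, 0 ≤ A i j := by
      intro i j; fin_cases i <;> fin_cases j <;> simp [hAdef] <;> omega
    have hAdet : A.det = 1 := by
      rw [Matrix.det_fin_two_of]; linear_combination hdet
    have hlt : (A 0 0 + A 0 1 + A 1 0 + A 1 1).toNat < n := by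
      have e : A 0 0 + A 0 1 + A 1 0 + A 1 1 = M 1 0 + M 1 1 := by
        simp [hAdef]; ring
      omega
    obtain ⟨w, hw⟩ := ih _ hlt A hApos hAdet rfl
    refine ⟨false :: w, ?_⟩
    rw [wprod_cons_false, hw, Vmul]
    rw [Matrix.eta_fin_two M]
    congr 1 <;> simp [hAdef] <;> ring
  · -- remaining: M = 1
    push_neg at hT hV
    rcases le_or_gt (M 1 0) (M 0 0) with h1 | h1
    · have h2 := hT h1
      rcases eq_or_lt_of_le h1 with heq | hlt1
      · exact absurd (hV heq.ge) (by omega)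
      ·
        have key : (M 1 0 + 1) * (M 0 1 + 1) ≤ M 0 0 * M 1 1 :=
          mul_le_mul (by omega) (by omega) (by omega) (by omega)
        have hb1 : M 0 1 = 0 := by nlinarith [key]
        have hb2 : M 1 0 = 0 := by nlinarith [key]
        have ha1 : M 0 0 = 1 := by
          nlinarith [mul_le_mul_of_nonneg_left (show (1:ℤ) ≤ M 1 1 by omega) h00]
        have ha2 : M 1 1 = 1 := by
          nlinarith [mul_le_mul_of_nonneg_right (show (1:ℤ) ≤ M 0 0 by omega) h11]
        refine ⟨[], ?_⟩
        rw [wprod_nil, Matrix.eta_fin_two M, ha1, ha2, hb1, hb2]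
        exact Matrix.one_fin_two
    · have h2 := hV h1.le
      exfalso; nlinarith


/-- The monoid `SL(2,ℕ₀)` of 2×2 matrices with nonnegative integer entries and
determinant 1 is freely generated by `T` and `V`: every such matrix is the
product of a unique word in `T` and `V`. -/
theorem sl2_nonneg_free_monoid (M : Matrix (Fin 2) (Fin 2) ℤ)
    (hpos : ∀ i j, 0 ≤ M i j) (hdet : M.det = 1) :
    ∃! w : List Bool, (w.map (fun x => if x then Tmat else Vmat)).prod = M := by
  obtain ⟨w, hw⟩ := exists_word _ M hpos hdet rfl
  exact ⟨w, hw, fun w' hw' => word_inj w' w (hw'.trans hw.symm)⟩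
end

section
/- For every t ∈ [π/3, 2π/3], the function x ↦ F(x,t) + F(1 + 1/x, t) is decreasing on [4/3, ∞), where F(x,t) = x/(1 + x² − 2x cos t). In particular, F(x,t) + F(1 + 1/x, t) < 2·F(φ, t) for all x ∈ (φ, ∞), where φ = (1+√5)/2 is the golden ratio. -/
set_option maxHeartbeats 1000000

open Real

/-- The function `F(x,t) = x/(1 + x² − 2x cos t)`. -/
noncomputable def F (x t : ℝ) : ℝ := x / (1 + x ^ 2 - 2 * x * Real.cos t)

/-- The golden ratio `φ = (1+√5)/2`. -/
noncomputable def phi : ℝ := (1 + Real.sqrt 5) / 2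

private lemma aux0 (x y : ℝ) (hx : 4/3 ≤ x) (hy : 4/3 ≤ y) :
    (x+y+1) * ((x^2-x+1)*(y^2-y+1)) < (x*y-1) * ((x^2+x+1)*(y^2+y+1)) := by
  nlinarith [mul_nonneg (by linarith : (0:ℝ) ≤ x-4/3) (by linarith : (0:ℝ) ≤ y-4/3), sq_nonneg (x-y), sq_nonneg (x*y-1), mul_nonneg (mul_nonneg (by linarith : (0:ℝ) ≤ x-4/3) (by linarith : (0:ℝ) ≤ y-4/3)) (mul_nonneg (by linarith : (0:ℝ) ≤ x) (by linarith : (0:ℝ) ≤ y)), sq_nonneg ((x-4/3)*(y-4/3)), mul_nonneg (mul_nonneg (by linarith : (0:ℝ) ≤ x-4/3) (by linarith : (0:ℝ) ≤ x-4/3)) (by linarith : (0:ℝ) ≤ y-4/3), mul_nonneg (mul_nonneg (by linarith : (0:ℝ) ≤ y-4/3) (by linarith : (0:ℝ) ≤ y-4/3)) (by linarith : (0:ℝ) ≤ x-4/3)]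

private lemma aux1 (x y : ℝ) (hx : 4/3 ≤ x) (hy : 4/3 ≤ y) :
    (x+y+1) * (x*(y^2-y+1)+y*(x^2-x+1)) ≤ (x*y-1) * ((x^2+x+1)*(y^2+y)+(y^2+y+1)*(x^2+x)) := by
  nlinarith [mul_nonneg (by linarith : (0:ℝ) ≤ x-4/3) (by linarith : (0:ℝ) ≤ y-4/3), sq_nonneg (x-y), sq_nonneg (x*y-1), mul_nonneg (mul_nonneg (by linarith : (0:ℝ) ≤ x-4/3) (by linarith : (0:ℝ) ≤ y-4/3)) (mul_nonneg (by linarith : (0:ℝ) ≤ x) (by linarith : (0:ℝ) ≤ y)), mul_nonneg (mul_nonneg (by linarith : (0:ℝ) ≤ x-4/3) (by linarith : (0:ℝ) ≤ x-4/3)) (by linarith : (0:ℝ) ≤ y-4/3), mul_nonneg (mul_nonneg (by linarith : (0:ℝ) ≤ y-4/3) (by linarith : (0:ℝ) ≤ y-4/3)) (by linarith : (0:ℝ) ≤ x-4/3)]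

private lemma aux2 (x y : ℝ) (hx : 4/3 ≤ x) (hy : 4/3 ≤ y) :
    x+y+1 ≤ (x*y-1) * ((x+1)*(y+1)) := by
  nlinarith [mul_nonneg (by linarith : (0:ℝ) ≤ x-4/3) (by linarith : (0:ℝ) ≤ y-4/3), mul_nonneg (mul_nonneg (by linarith : (0:ℝ) ≤ x-4/3) (by linarith : (0:ℝ) ≤ y-4/3)) (mul_nonneg (by linarith : (0:ℝ) ≤ x) (by linarith : (0:ℝ) ≤ y)), sq_nonneg (x-y)]

private lemma key (x y c : ℝ) (hx : 4/3 ≤ x) (hy : 4/3 ≤ y) (hc : -(1/2) ≤ c) (hc' : c ≤ 1/2) :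
    (x+y+1) * ((1+x^2-2*x*c)*(1+y^2-2*y*c)) <
    (x*y-1) * ((2*x^2+2*x+1-2*c*(x^2+x))*(2*y^2+2*y+1-2*c*(y^2+y))) := by
  have he : (0:ℝ) ≤ 1 - 2*c := by linarith
  have h0 := aux0 x y hx hy
  have H1 : 0 ≤ (1-2*c) * ((x*y-1) * ((x^2+x+1)*(y^2+y)+(y^2+y+1)*(x^2+x)) -
      (x+y+1) * (x*(y^2-y+1)+y*(x^2-x+1))) :=
    mul_nonneg he (by linarith [aux1 x y hx hy])
  have H2 : 0 ≤ ((1-2*c) * (1-2*c) * (x * y)) * ((x*y-1) * ((x+1)*(y+1)) - (x+y+1)) := by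
    apply mul_nonneg
    · apply mul_nonneg (mul_nonneg he he); nlinarith
    · linarith [aux2 x y hx hy]
  nlinarith [H1, H2, h0]

private lemma F_shift (x t : ℝ) (hx : 0 < x) :
    F (1 + 1/x) t = (x^2+x) / (2*x^2+2*x+1-2*Real.cos t*(x^2+x)) := by
  have hc1 : Real.cos t ≤ 1 := Real.cos_le_one t
  have hx' : (0:ℝ) < 1/x := by positivity
  have h1 : (0:ℝ) < 1 + (1+1/x)^2 - 2*(1+1/x)*Real.cos t := by nlinarith
  have h2 : (0:ℝ) < 2*x^2+2*x+1-2*Real.cos t*(x^2+x) := by nlinarith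
  rw [F, div_eq_div_iff h1.ne' h2.ne']
  field_simp
  ring

/-- For every `t ∈ [π/3, 2π/3]`, the function `x ↦ F(x,t) + F(1 + 1/x, t)` is
decreasing on `[4/3, ∞)`; in particular
`F(x,t) + F(1+1/x,t) < 2 F(φ,t)` for all `x > φ`. -/
theorem F_plus_FPhi_antitone (t : ℝ) (ht : t ∈ Set.Icc (π / 3) (2 * π / 3)) :
    StrictAntiOn (fun x : ℝ => F x t + F (1 + 1 / x) t) (Set.Ici (4 / 3 : ℝ)) ∧
    ∀ x : ℝ, phi < x → F x t + F (1 + 1 / x) t < 2 * F phi t := by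
  obtain ⟨ht1, ht2⟩ := ht
  have hpi := Real.pi_pos
  set c : ℝ := Real.cos t with hc_def
  have hc' : c ≤ 1/2 := by
    rw [hc_def, ← Real.cos_pi_div_three]
    exact Real.cos_le_cos_of_nonneg_of_le_pi (by linarith) (by linarith) ht1
  have hc : -(1/2) ≤ c := by
    have h1 : Real.cos (2*π/3) ≤ c := by
      rw [hc_def]
      exact Real.cos_le_cos_of_nonneg_of_le_pi (by linarith) (by linarith) ht2
    have h23 : Real.cos (2*π/3) = -(1/2) := by
      rw [show (2*π/3 : ℝ) = π - π/3 by ring, Real.cos_pi_sub, Real.cos_pi_div_three]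
    linarith
  clear_value c
  have main : StrictAntiOn (fun x : ℝ => F x t + F (1 + 1 / x) t) (Set.Ici (4 / 3 : ℝ)) := by
    intro x hx y hy hxy
    simp only [Set.mem_Ici] at hx hy
    have hx0 : (0:ℝ) < x := by linarith
    have hy0 : (0:ℝ) < y := by linarith
    have hDx : (0:ℝ) < 1 + x^2 - 2*x*c := by nlinarith
    have hDy : (0:ℝ) < 1 + y^2 - 2*y*c := by nlinarith
    have hEx : (0:ℝ) < 2*x^2+2*x+1-2*c*(x^2+x) := by nlinarith
    have hEy : (0:ℝ) < 2*y^2+2*y+1-2*c*(y^2+y) := by nlinarith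
    have hkey := key x y c hx hy hc hc'
    show F y t + F (1 + 1/y) t < F x t + F (1 + 1/x) t
    rw [F_shift x t hx0, F_shift y t hy0]
    simp only [F, ← hc_def]
    rw [div_add_div _ _ (by positivity) (by positivity),
      div_add_div _ _ (by positivity) (by positivity),
      div_lt_div_iff₀ (mul_pos hDy hEy) (mul_pos hDx hEx)]
    have Hprod : 0 < (y - x) * ((x*y-1) * ((2*x^2+2*x+1-2*c*(x^2+x))*(2*y^2+2*y+1-2*c*(y^2+y)))
        - (x+y+1) * ((1+x^2-2*x*c)*(1+y^2-2*y*c))) :=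
      mul_pos (by linarith) (by linarith)
    nlinarith [Hprod]
  refine ⟨main, ?_⟩
  have h5 : Real.sqrt 5 ^ 2 = 5 := Real.sq_sqrt (by norm_num)
  have hs2 : (2:ℝ) ≤ Real.sqrt 5 := by nlinarith [Real.sqrt_nonneg 5]
  have hphi_pos : (0:ℝ) < phi := by unfold phi; linarith
  have hphi43 : (4/3:ℝ) ≤ phi := by unfold phi; linarith
  have hfix : 1 + 1/phi = phi := by
    have : phi * phi = phi + 1 := by unfold phi; field_simp; nlinarith [h5]
    field_simp
    linarith [this]
  intro x hx
  have hlt := main (Set.mem_Ici.mpr hphi43) (Set.mem_Ici.mpr (by linarith)) hx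
  simp only at hlt
  rw [hfix] at hlt
  linarith
end

section
/- For every t ∈ [π/3, 2π/3], the function x ↦ F(x,t) + F(1 + 1/x, t) + F(2 + 1/x, t) is decreasing on [φ, ∞), where F(x,t) = x/(1 + x² − 2x cos t) and φ = (1+√5)/2. -/
open Real

set_option maxHeartbeats 2000000 in
private lemma key_poly (x c : ℝ) (hx : (3:ℝ)/2 ≤ x) (hc1 : -(1/2) ≤ c) (hc2 : c ≤ 1/2) :
    0 < (x^2 - 1) * (2*x^2 + 2*x + 1 - 2*c*(x^2 + x))^2 * (5*x^2 + 4*x + 1 - 2*c*(2*x^2 + x))^2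
      - (2*x + 1) * (1 + x^2 - 2*c*x)^2 * (5*x^2 + 4*x + 1 - 2*c*(2*x^2 + x))^2
      - (3*x^2 + 4*x + 1) * (1 + x^2 - 2*c*x)^2 * (2*x^2 + 2*x + 1 - 2*c*(x^2 + x))^2 := by
  have hs : (0:ℝ) ≤ x - 3/2 := by linarith
  have hd : (0:ℝ) ≤ 1/2 - c := by linarith
  have he : (0:ℝ) ≤ 1/2 + c := by linarith
  have hS0 : (0:ℝ) ≤ (389907/32) * (x - 3/2) + (4498455/128) * (x - 3/2) ^ 2 + (215793/4) * (x - 3/2) ^ 3 + (823199/16) * (x - 3/2) ^ 4 + 32664 * (x - 3/2) ^ 5 + (56867/4) * (x - 3/2) ^ 6 + 4252 * (x - 3/2) ^ 7 + (1699/2) * (x - 3/2) ^ 8 + 104 * (x - 3/2) ^ 9 + 6 * (x - 3/2) ^ 10 := by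
    linarith [pow_nonneg hs 2, pow_nonneg hs 3, pow_nonneg hs 4, pow_nonneg hs 5, pow_nonneg hs 6, pow_nonneg hs 7, pow_nonneg hs 8, pow_nonneg hs 9, pow_nonneg hs 10]
  have hS1 : (0:ℝ) ≤ (175833/32) + (3507909/32) * (x - 3/2) + (10898517/32) * (x - 3/2) ^ 2 + 554130 * (x - 3/2) ^ 3 + (2226323/4) * (x - 3/2) ^ 4 + 370617 * (x - 3/2) ^ 5 + 168281 * (x - 3/2) ^ 6 + 52016 * (x - 3/2) ^ 7 + 10574 * (x - 3/2) ^ 8 + 1288 * (x - 3/2) ^ 9 + 72 * (x - 3/2) ^ 10 := by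
    linarith [pow_nonneg hs 2, pow_nonneg hs 3, pow_nonneg hs 4, pow_nonneg hs 5, pow_nonneg hs 6, pow_nonneg hs 7, pow_nonneg hs 8, pow_nonneg hs 9, pow_nonneg hs 10]
  have hS2 : (0:ℝ) ≤ (2856897/128) + (5809005/16) * (x - 3/2) + (77940243/64) * (x - 3/2) ^ 2 + 2090259 * (x - 3/2) ^ 3 + (17547711/8) * (x - 3/2) ^ 4 + 1516806 * (x - 3/2) ^ 5 + (1422735/2) * (x - 3/2) ^ 6 + 225648 * (x - 3/2) ^ 7 + 46659 * (x - 3/2) ^ 8 + 5712 * (x - 3/2) ^ 9 + 316 * (x - 3/2) ^ 10 := by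
    linarith [pow_nonneg hs 2, pow_nonneg hs 3, pow_nonneg hs 4, pow_nonneg hs 5, pow_nonneg hs 6, pow_nonneg hs 7, pow_nonneg hs 8, pow_nonneg hs 9, pow_nonneg hs 10]
  have hS3 : (0:ℝ) ≤ (1797201/64) + (16718121/32) * (x - 3/2) + (60942639/32) * (x - 3/2) ^ 2 + 3442791 * (x - 3/2) ^ 3 + (15033137/4) * (x - 3/2) ^ 4 + 2684049 * (x - 3/2) ^ 5 + 1292795 * (x - 3/2) ^ 6 + 418912 * (x - 3/2) ^ 7 + 87962 * (x - 3/2) ^ 8 + 10856 * (x - 3/2) ^ 9 + 600 * (x - 3/2) ^ 10 := by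
    linarith [pow_nonneg hs 2, pow_nonneg hs 3, pow_nonneg hs 4, pow_nonneg hs 5, pow_nonneg hs 6, pow_nonneg hs 7, pow_nonneg hs 8, pow_nonneg hs 9, pow_nonneg hs 10]
  have hS4 : (0:ℝ) ≤ (1182285/128) + (8768913/32) * (x - 3/2) + (140705139/128) * (x - 3/2) ^ 2 + (8379111/4) * (x - 3/2) ^ 3 + (37980179/16) * (x - 3/2) ^ 4 + 1744668 * (x - 3/2) ^ 5 + (3437615/4) * (x - 3/2) ^ 6 + 283268 * (x - 3/2) ^ 7 + (120391/2) * (x - 3/2) ^ 8 + 7480 * (x - 3/2) ^ 9 + 414 * (x - 3/2) ^ 10 := by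
    linarith [pow_nonneg hs 2, pow_nonneg hs 3, pow_nonneg hs 4, pow_nonneg hs 5, pow_nonneg hs 6, pow_nonneg hs 7, pow_nonneg hs 8, pow_nonneg hs 9, pow_nonneg hs 10]
  have ht0 := mul_nonneg (pow_nonneg he 4) hS0
  have ht1 := mul_nonneg (mul_nonneg (pow_nonneg hd 1) (pow_nonneg he 3)) hS1
  have ht2 := mul_nonneg (mul_nonneg (pow_nonneg hd 2) (pow_nonneg he 2)) hS2
  have ht3 := mul_nonneg (mul_nonneg (pow_nonneg hd 3) (pow_nonneg he 1)) hS3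
  have ht4 := mul_nonneg (pow_nonneg hd 4) hS4
  linarith [ht0, ht1, ht2, ht3, ht4]

set_option maxHeartbeats 4000000 in
/-- For every `t ∈ [π/3, 2π/3]`, the function
`x ↦ F(x,t) + F(1 + 1/x, t) + F(2 + 1/x, t)` is decreasing on `[φ, ∞)`. -/
theorem F_Phi_Psi_antitone (t : ℝ) (ht : t ∈ Set.Icc (π / 3) (2 * π / 3)) :
    StrictAntiOn (fun x : ℝ => F x t + F (1 + 1 / x) t + F (2 + 1 / x) t)
      (Set.Ici phi) := by
  obtain ⟨ht1, ht2⟩ := ht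
  have hπ := Real.pi_pos
  have hc2 : Real.cos t ≤ 1/2 := by
    have := Real.cos_le_cos_of_nonneg_of_le_pi (by positivity) (by linarith) ht1
    rwa [Real.cos_pi_div_three] at this
  have hc1 : -(1/2) ≤ Real.cos t := by
    have := Real.cos_le_cos_of_nonneg_of_le_pi (by linarith) (by linarith) ht2
    rw [show 2 * π / 3 = π - π/3 by ring, Real.cos_pi_sub, Real.cos_pi_div_three] at this
    linarith
  have h5 : (2:ℝ) < Real.sqrt 5 := by
    nlinarith [Real.sq_sqrt (show (0:ℝ) ≤ 5 by norm_num), Real.sqrt_nonneg 5]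
  have hphi : (3:ℝ)/2 < phi := by rw [phi]; linarith
  have hden : ∀ y : ℝ, 0 < 1 + y^2 - 2*y*Real.cos t := by
    intro y
    nlinarith [mul_nonneg (show (0:ℝ) ≤ 1/2 - Real.cos t by linarith) (sq_nonneg (y+1)),
      mul_nonneg (show (0:ℝ) ≤ 1/2 + Real.cos t by linarith) (sq_nonneg (y-1)), sq_nonneg y]
  -- derivative of the sum (raw form)
  have hder : ∀ x : ℝ, 3/2 ≤ x →
      HasDerivAt (fun x : ℝ => F x t + F (1 + 1 / x) t + F (2 + 1 / x) t)
        ((1 * (1 + x ^ 2 - 2 * x * Real.cos t) - x * (2 * x - 2 * Real.cos t)) /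
            (1 + x ^ 2 - 2 * x * Real.cos t) ^ 2 +
          (-(x ^ 2)⁻¹ * (1 + (1 + 1 / x) ^ 2 - 2 * (1 + 1 / x) * Real.cos t) -
              (1 + 1 / x) * (2 * (1 + 1 / x) ^ 1 * -(x ^ 2)⁻¹ - 2 * -(x ^ 2)⁻¹ * Real.cos t)) /
            (1 + (1 + 1 / x) ^ 2 - 2 * (1 + 1 / x) * Real.cos t) ^ 2 +
          (-(x ^ 2)⁻¹ * (1 + (2 + 1 / x) ^ 2 - 2 * (2 + 1 / x) * Real.cos t) -
              (2 + 1 / x) * (2 * (2 + 1 / x) ^ 1 * -(x ^ 2)⁻¹ - 2 * -(x ^ 2)⁻¹ * Real.cos t)) /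
            (1 + (2 + 1 / x) ^ 2 - 2 * (2 + 1 / x) * Real.cos t) ^ 2) x := by
    intro x hx
    have hx0 : x ≠ 0 := by intro h; rw [h] at hx; norm_num at hx
    set c := Real.cos t with hc
    have hD : (1:ℝ) + x^2 - 2*x*c ≠ 0 := ne_of_gt (by have := hden x; linarith)
    have hDu : (1:ℝ) + (1+1/x)^2 - 2*(1+1/x)*c ≠ 0 := ne_of_gt (by have := hden (1+1/x); linarith)
    have hDv : (1:ℝ) + (2+1/x)^2 - 2*(2+1/x)*c ≠ 0 := ne_of_gt (by have := hden (2+1/x); linarith)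
    have hden1 : HasDerivAt (fun x : ℝ => 1 + x^2 - 2*x*c) (2*x - 2*c) x := by
      have h := (((hasDerivAt_pow 2 x).const_add 1).sub (((hasDerivAt_id x).const_mul 2).mul_const c))
      simp at h; exact h
    have h1 : HasDerivAt (fun x : ℝ => x / (1 + x^2 - 2*x*c))
        ((1 * (1 + x^2 - 2*x*c) - x * (2*x - 2*c)) / (1 + x^2 - 2*x*c)^2) x :=
      (hasDerivAt_id x).div hden1 hD
    have hu : HasDerivAt (fun x : ℝ => 1 + 1/x) (-(x^2)⁻¹) x := by
      simpa [one_div] using (hasDerivAt_inv hx0).const_add (1:ℝ)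
    have hv : HasDerivAt (fun x : ℝ => 2 + 1/x) (-(x^2)⁻¹) x := by
      simpa [one_div] using (hasDerivAt_inv hx0).const_add (2:ℝ)
    have hden2 : HasDerivAt (fun x : ℝ => 1 + (1+1/x)^2 - 2*(1+1/x)*c)
        (2*(1+1/x)^1 * (-(x^2)⁻¹) - 2*(-(x^2)⁻¹)*c) x :=
      ((hu.pow 2).const_add 1).sub ((hu.const_mul 2).mul_const c)
    have h2 : HasDerivAt (fun x : ℝ => (1+1/x) / (1 + (1+1/x)^2 - 2*(1+1/x)*c))
        (((-(x^2)⁻¹) * (1 + (1+1/x)^2 - 2*(1+1/x)*c)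
          - (1+1/x) * (2*(1+1/x)^1 * (-(x^2)⁻¹) - 2*(-(x^2)⁻¹)*c)) /
          (1 + (1+1/x)^2 - 2*(1+1/x)*c)^2) x :=
      hu.div hden2 hDu
    have hden3 : HasDerivAt (fun x : ℝ => 1 + (2+1/x)^2 - 2*(2+1/x)*c)
        (2*(2+1/x)^1 * (-(x^2)⁻¹) - 2*(-(x^2)⁻¹)*c) x :=
      ((hv.pow 2).const_add 1).sub ((hv.const_mul 2).mul_const c)
    have h3 : HasDerivAt (fun x : ℝ => (2+1/x) / (1 + (2+1/x)^2 - 2*(2+1/x)*c))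
        (((-(x^2)⁻¹) * (1 + (2+1/x)^2 - 2*(2+1/x)*c)
          - (2+1/x) * (2*(2+1/x)^1 * (-(x^2)⁻¹) - 2*(-(x^2)⁻¹)*c)) /
          (1 + (2+1/x)^2 - 2*(2+1/x)*c)^2) x :=
      hv.div hden3 hDv
    have H := (h1.add h2).add h3
    have hfun : (fun x : ℝ => x / (1 + x^2 - 2*x*c) + (1+1/x) / (1 + (1+1/x)^2 - 2*(1+1/x)*c)
        + (2+1/x) / (1 + (2+1/x)^2 - 2*(2+1/x)*c))
        = (fun x : ℝ => F x t + F (1 + 1 / x) t + F (2 + 1 / x) t) := by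
      funext y
      simp only [F, ← hc]
    rw [← hfun]; exact H
  -- conclude
  apply strictAntiOn_of_deriv_neg (convex_Ici phi)
  · intro x hx
    exact ((hder x (le_trans hphi.le hx)).continuousAt).continuousWithinAt
  · intro x hx
    rw [interior_Ici] at hx
    have hx32 : (3:ℝ)/2 ≤ x := le_trans hphi.le (le_of_lt hx)
    have hx0 : x ≠ 0 := by intro h; rw [h] at hx32; norm_num at hx32
    rw [(hder x hx32).deriv]
    have hkey := key_poly x (Real.cos t) hx32 hc1 hc2
    have hDpos : (0:ℝ) < 1 + x^2 - 2*Real.cos t*x := by have := hden x; linarith [hden x]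
    have hApos : (0:ℝ) < 2*x^2 + 2*x + 1 - 2*Real.cos t*(x^2 + x) := by
      have h := hden (1+1/x)
      have e : (2:ℝ)*x^2 + 2*x + 1 - 2*Real.cos t*(x^2 + x)
          = x^2 * (1 + (1+1/x)^2 - 2*(1+1/x)*Real.cos t) := by
        field_simp; ring
      rw [e]
      exact mul_pos (by positivity) h
    have hBpos : (0:ℝ) < 5*x^2 + 4*x + 1 - 2*Real.cos t*(2*x^2 + x) := by
      have h := hden (2+1/x)
      have e : (5:ℝ)*x^2 + 4*x + 1 - 2*Real.cos t*(2*x^2 + x)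
          = x^2 * (1 + (2+1/x)^2 - 2*(2+1/x)*Real.cos t) := by
        field_simp; ring
      rw [e]
      exact mul_pos (by positivity) h
    have e1 : (1 * (1 + x ^ 2 - 2 * x * Real.cos t) - x * (2 * x - 2 * Real.cos t)) /
            (1 + x ^ 2 - 2 * x * Real.cos t) ^ 2
        = (1 - x^2) / (1 + x ^ 2 - 2 * x * Real.cos t) ^ 2 := by ring
    have e2 : (-(x ^ 2)⁻¹ * (1 + (1 + 1 / x) ^ 2 - 2 * (1 + 1 / x) * Real.cos t) -
              (1 + 1 / x) * (2 * (1 + 1 / x) ^ 1 * -(x ^ 2)⁻¹ - 2 * -(x ^ 2)⁻¹ * Real.cos t)) /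
            (1 + (1 + 1 / x) ^ 2 - 2 * (1 + 1 / x) * Real.cos t) ^ 2
        = (2*x + 1) / (2*x^2 + 2*x + 1 - 2*Real.cos t*(x^2 + x)) ^ 2 := by
      have hDu : (0:ℝ) < 1 + (1+1/x)^2 - 2*(1+1/x)*Real.cos t := hden (1+1/x)
      rw [div_eq_div_iff (ne_of_gt (pow_pos hDu 2)) (ne_of_gt (pow_pos hApos 2))]
      field_simp
      ring
    have e3 : (-(x ^ 2)⁻¹ * (1 + (2 + 1 / x) ^ 2 - 2 * (2 + 1 / x) * Real.cos t) -
              (2 + 1 / x) * (2 * (2 + 1 / x) ^ 1 * -(x ^ 2)⁻¹ - 2 * -(x ^ 2)⁻¹ * Real.cos t)) /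
            (1 + (2 + 1 / x) ^ 2 - 2 * (2 + 1 / x) * Real.cos t) ^ 2
        = (3*x^2 + 4*x + 1) / (5*x^2 + 4*x + 1 - 2*Real.cos t*(2*x^2 + x)) ^ 2 := by
      have hDv : (0:ℝ) < 1 + (2+1/x)^2 - 2*(2+1/x)*Real.cos t := hden (2+1/x)
      rw [div_eq_div_iff (ne_of_gt (pow_pos hDv 2)) (ne_of_gt (pow_pos hBpos 2))]
      field_simp
      ring
    rw [e1, e2, e3]
    have efin : (1 - x^2) / (1 + x ^ 2 - 2 * x * Real.cos t) ^ 2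
        + (2*x + 1) / (2*x^2 + 2*x + 1 - 2*Real.cos t*(x^2 + x)) ^ 2
        + (3*x^2 + 4*x + 1) / (5*x^2 + 4*x + 1 - 2*Real.cos t*(2*x^2 + x)) ^ 2
        = -(((x^2 - 1) * (2*x^2 + 2*x + 1 - 2*Real.cos t*(x^2 + x))^2 * (5*x^2 + 4*x + 1 - 2*Real.cos t*(2*x^2 + x))^2
      - (2*x + 1) * (1 + x^2 - 2*Real.cos t*x)^2 * (5*x^2 + 4*x + 1 - 2*Real.cos t*(2*x^2 + x))^2
      - (3*x^2 + 4*x + 1) * (1 + x^2 - 2*Real.cos t*x)^2 * (2*x^2 + 2*x + 1 - 2*Real.cos t*(x^2 + x))^2)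
        / ((1 + x^2 - 2*Real.cos t*x)^2 * (2*x^2 + 2*x + 1 - 2*Real.cos t*(x^2 + x))^2
          * (5*x^2 + 4*x + 1 - 2*Real.cos t*(2*x^2 + x))^2)) := by
      have hDx : (0:ℝ) < 1 + x ^ 2 - 2 * x * Real.cos t := hden x
      rw [div_add_div _ _ (ne_of_gt (pow_pos hDx 2)) (ne_of_gt (pow_pos hApos 2)),
        div_add_div _ _ (ne_of_gt (mul_pos (pow_pos hDx 2) (pow_pos hApos 2)))
          (ne_of_gt (pow_pos hBpos 2)), neg_div' ]
      rw [div_eq_div_iff (ne_of_gt (mul_pos (mul_pos (pow_pos hDx 2) (pow_pos hApos 2)) (pow_pos hBpos 2)))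
        (ne_of_gt (mul_pos (mul_pos (pow_pos hDpos 2) (pow_pos hApos 2)) (pow_pos hBpos 2)))]
      ring
    rw [efin]
    have hq : (0:ℝ) < (1 + x^2 - 2*Real.cos t*x)^2 * (2*x^2 + 2*x + 1 - 2*Real.cos t*(x^2 + x))^2
          * (5*x^2 + 4*x + 1 - 2*Real.cos t*(2*x^2 + x))^2 :=
      mul_pos (mul_pos (pow_pos hDpos 2) (pow_pos hApos 2)) (pow_pos hBpos 2)
    have := div_pos hkey hq
    linarith
end

section
/- The polynomial p(x) = x⁶ + 5x⁴ − 4x³ − x² − 2x − 2 is strictly positive for all x ≥ (1+√5)/2. -/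
/-- The polynomial `p(x) = x⁶ + 5x⁴ − 4x³ − x² − 2x − 2` is strictly positive
for all `x ≥ (1+√5)/2`. -/
theorem poly_p_pos (x : ℝ) (hx : (1 + Real.sqrt 5) / 2 ≤ x) :
    0 < x ^ 6 + 5 * x ^ 4 - 4 * x ^ 3 - x ^ 2 - 2 * x - 2 := by
  have h5 : (2:ℝ) ≤ Real.sqrt 5 := by
    nlinarith [Real.sq_sqrt (by norm_num : (5:ℝ) ≥ 0), Real.sqrt_nonneg 5]
  have hx2 : (3:ℝ)/2 ≤ x := by linarith
  nlinarith [pow_pos (show (0:ℝ) < x by linarith) 2, sq_nonneg (x - 3/2), sq_nonneg x, sq_nonneg (x^2 - 3/2*x), sq_nonneg (x^3 - 3/2)]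
end

section
/- Let x = [overline{c₁; c₂, …, c_r}] and y = [overline{d₁; d₂, …, d_s}] be purely periodic quadratic irrationals with x < y, let N be their back matching (the number of equal partial quotients counted from the end of the periods, after repeating periods so r = s), and let 0 ≤ i ≤ N. Denote by w_{(ℓ(w)−i)} the cyclic permutation of the period of w moving the last i partial quotients to the front. Then x_{(ℓ(x)−i)} < y_{(ℓ(y)−i)} if i is even, and x_{(ℓ(x)−i)} > y_{(ℓ(y)−i)} if i is odd. -/
/-- `IsCF x a` : the irrational real number `x` has simple continued fraction
expansion `[a 0; a 1, a 2, …]`, expressed via the Gauss-map orbit. -/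
def IsCF (x : ℝ) (a : ℕ → ℕ) : Prop :=
  ∃ t : ℕ → ℝ, t 0 = x ∧
    ∀ n, ⌊t n⌋ = (a n : ℤ) ∧ (a n : ℝ) < t n ∧ t (n + 1) = (t n - a n)⁻¹

/-- The periodic sequence of partial quotients with period the list `L`. -/
def per (L : List ℕ) : ℕ → ℕ := fun n => L.getD (n % L.length) 1

lemma per_ge_one (L : List ℕ) (hL : ∀ a ∈ L, 1 ≤ a) (k : ℕ) : 1 ≤ per L k := by
  unfold per
  rcases lt_or_ge (k % L.length) L.length with h | h
  · rw [List.getD_eq_getElem _ _ h]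
    exact hL _ (List.getElem_mem h)
  · rw [List.getD_eq_default _ _ h]

lemma per_rotate (L : List ℕ) (m k : ℕ) (h : 0 < L.length) :
    per (L.rotate m) k = L.getD ((k + m) % L.length) 1 := by
  unfold per
  have hk : k % (L.rotate m).length < (L.rotate m).length := by
    rw [List.length_rotate]; exact Nat.mod_lt _ h
  rw [List.getD_eq_getElem _ _ hk, List.getElem_rotate,
    List.getD_eq_getElem _ _ (Nat.mod_lt _ h)]
  congr 1
  rw [List.length_rotate, Nat.mod_add_mod]

lemma IsCF_tail {x : ℝ} {a : ℕ → ℕ} (h : IsCF x a) :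
    IsCF (x - a 0)⁻¹ (fun n => a (n + 1)) := by
  obtain ⟨t, ht0, ht⟩ := h
  refine ⟨fun n => t (n + 1), ?_, fun n => ht (n + 1)⟩
  show t (0 + 1) = (x - (a 0 : ℝ))⁻¹
  rw [(ht 0).2.2, ht0]

lemma IsCF_one_lt {x : ℝ} {a : ℕ → ℕ} (h : IsCF x a) (h1 : 1 ≤ a 0) : 1 < x := by
  obtain ⟨t, ht0, ht⟩ := h
  have := (ht 0).2.1
  rw [ht0] at this
  exact lt_of_le_of_lt (by exact_mod_cast h1) this

lemma cf_unique (a : ℕ → ℕ) (ha : ∀ n, 1 ≤ a n) {x y : ℝ}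
    (hx : IsCF x a) (hy : IsCF y a) : x = y := by
  obtain ⟨t, ht0, ht⟩ := hx
  obtain ⟨s, hs0, hs⟩ := hy
  have tlt : ∀ n, (a n : ℝ) < t n := fun n => (ht n).2.1
  have slt : ∀ n, (a n : ℝ) < s n := fun n => (hs n).2.1
  have t1 : ∀ n, 1 < t n := fun n =>
    lt_of_le_of_lt (by exact_mod_cast ha n) (tlt n)
  have s1 : ∀ n, 1 < s n := fun n =>
    lt_of_le_of_lt (by exact_mod_cast ha n) (slt n)
  have tub : ∀ n, t n < a n + 1 := by
    intro n
    have := Int.lt_floor_add_one (t n)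
    rw [(ht n).1] at this
    exact_mod_cast this
  have sub : ∀ n, s n < a n + 1 := by
    intro n
    have := Int.lt_floor_add_one (s n)
    rw [(hs n).1] at this
    exact_mod_cast this
  have teq : ∀ n, t n = a n + (t (n + 1))⁻¹ := by
    intro n
    rw [(ht n).2.2, inv_inv]; ring
  have seq : ∀ n, s n = a n + (s (n + 1))⁻¹ := by
    intro n
    rw [(hs n).2.2, inv_inv]; ring
  have step : ∀ n, |t (n+1) - s (n+1)| = |t n - s n| * (t (n+1) * s (n+1)) := by
    intro n
    have h1 : (t (n+1)) ≠ 0 := ne_of_gt (lt_trans one_pos (t1 _))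
    have h2 : (s (n+1)) ≠ 0 := ne_of_gt (lt_trans one_pos (s1 _))
    have : t n - s n = (s (n+1) - t (n+1)) / (t (n+1) * s (n+1)) := by
      rw [teq n, seq n]; field_simp; ring
    rw [this, abs_div, abs_of_pos (mul_pos (lt_trans one_pos (t1 _)) (lt_trans one_pos (s1 _))),
      div_mul_cancel₀ _ (by positivity), abs_sub_comm]
  have two_le_t : ∀ n, 2 ≤ t (n+1) * t (n+2) := by
    intro n
    have hpos : (0:ℝ) < t (n+2) := lt_trans one_pos (t1 _)
    have := teq (n+1)
    have ha1 : (1:ℝ) ≤ a (n+1) := by exact_mod_cast ha (n+1)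
    calc (2:ℝ) ≤ t (n+2) + 1 := by linarith [t1 (n+2)]
    _ ≤ (a (n+1)) * t (n+2) + 1 := by nlinarith
    _ = (a (n+1) + (t (n+2))⁻¹) * t (n+2) := by field_simp
    _ = t (n+1) * t (n+2) := by rw [← teq (n+1)]
  have two_le_s : ∀ n, 2 ≤ s (n+1) * s (n+2) := by
    intro n
    have hpos : (0:ℝ) < s (n+2) := lt_trans one_pos (s1 _)
    have ha1 : (1:ℝ) ≤ a (n+1) := by exact_mod_cast ha (n+1)
    calc (2:ℝ) ≤ s (n+2) + 1 := by linarith [s1 (n+2)]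
    _ ≤ (a (n+1)) * s (n+2) + 1 := by nlinarith
    _ = (a (n+1) + (s (n+2))⁻¹) * s (n+2) := by field_simp
    _ = s (n+1) * s (n+2) := by rw [← seq (n+1)]
  have key : ∀ n, 4 * |t n - s n| ≤ |t (n+2) - s (n+2)| := by
    intro n
    have e : |t (n+2) - s (n+2)|
        = |t n - s n| * ((t (n+1) * t (n+2)) * (s (n+1) * s (n+2))) := by
      rw [step (n+1), step n]; ring
    rw [e]
    have h4 : (4:ℝ) ≤ (t (n+1) * t (n+2)) * (s (n+1) * s (n+2)) := by
      nlinarith [two_le_t n, two_le_s n]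
    nlinarith [abs_nonneg (t n - s n)]
  have bound : ∀ m, 4 ^ m * |t 0 - s 0| ≤ |t (2*m) - s (2*m)| := by
    intro m
    induction m with
    | zero => simp
    | succ m ih =>
      have h2 : 2 * (m + 1) = 2 * m + 2 := by ring
      rw [h2]
      calc 4 ^ (m+1) * |t 0 - s 0| = 4 * (4 ^ m * |t 0 - s 0|) := by ring
      _ ≤ 4 * |t (2*m) - s (2*m)| := by linarith
      _ ≤ |t (2*m+2) - s (2*m+2)| := key (2*m)
  have small : ∀ n, |t n - s n| < 1 := by
    intro n
    rw [abs_sub_lt_iff]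
    constructor <;> linarith [tlt n, slt n, tub n, sub n]
  by_contra hne
  have hne' : x - y ≠ 0 := sub_ne_zero.2 hne
  have hpos : 0 < |x - y| := abs_pos.2 hne'
  obtain ⟨m, hm⟩ := pow_unbounded_of_one_lt (R := ℝ) (|x - y|)⁻¹ (by norm_num : (1:ℝ) < 4)
  have h1 : (1:ℝ) < 4 ^ m * |x - y| := by
    rw [← inv_mul_cancel₀ (ne_of_gt hpos)]
    exact mul_lt_mul_of_pos_right hm hpos
  have h2 := bound m
  rw [ht0, hs0] at h2
  linarith [small (2*m), h2, h1]


/-- Let `x < y` be purely periodic quadratic irrationals with periods `C`, `D`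
of common length `n` (after repeating periods), all partial quotients ≥ 1.
If `i ≤ n` and the last `i` partial quotients of the two periods agree
(i.e. `i` is at most the back matching of `x` and `y`), then the cyclic
permutations moving the last `i` quotients to the front satisfy
`x_{(n−i)} < y_{(n−i)}` for `i` even and `x_{(n−i)} > y_{(n−i)}` for `i` odd.
Moving the last `i` entries to the front is `List.rotate · (n − i)`. -/
theorem cyclic_permutation_comparison (C D : List ℕ) (n : ℕ) (hn : 0 < n)
    (hC : C.length = n) (hD : D.length = n)
    (hCpos : ∀ a ∈ C, 1 ≤ a) (hDpos : ∀ a ∈ D, 1 ≤ a)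
    (x y : ℝ) (hx : IsCF x (per C)) (hy : IsCF y (per D)) (hxy : x < y)
    (i : ℕ) (hi : i ≤ n)
    (hmatch : ∀ j < i, C.getD (n - 1 - j) 1 = D.getD (n - 1 - j) 1)
    (xi yi : ℝ)
    (hxi : IsCF xi (per (C.rotate (n - i))))
    (hyi : IsCF yi (per (D.rotate (n - i)))) :
    (Even i → xi < yi) ∧ (¬Even i → yi < xi) := by
  have hCn : 0 < C.length := hC ▸ hn
  have hDn : 0 < D.length := hD ▸ hn
  have hCrpos : ∀ m k, 1 ≤ per (C.rotate m) k := fun m k =>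
    per_ge_one _ (fun a haa => hCpos a (List.mem_rotate.1 haa)) k
  have hDrpos : ∀ m k, 1 ≤ per (D.rotate m) k := fun m k =>
    per_ge_one _ (fun a haa => hDpos a (List.mem_rotate.1 haa)) k
  have key : ∀ i, i ≤ n → (∀ j < i, C.getD (n-1-j) 1 = D.getD (n-1-j) 1) →
      ∀ xi yi, IsCF xi (per (C.rotate (n-i))) → IsCF yi (per (D.rotate (n-i))) →
      (Even i → xi < yi) ∧ (¬ Even i → yi < xi) := by
    intro i
    induction i with
    | zero =>
      intro _ _ xi yi hxi hyi
      rw [Nat.sub_zero, ← hC, List.rotate_length] at hxi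
      rw [Nat.sub_zero, ← hD, List.rotate_length] at hyi
      have hx' : xi = x := cf_unique (per C) (per_ge_one C hCpos) hxi hx
      have hy' : yi = y := cf_unique (per D) (per_ge_one D hDpos) hyi hy
      subst hx'; subst hy'
      exact ⟨fun _ => hxy, fun h => absurd Even.zero h⟩
    | succ i ih =>
      intro hsi hm xi yi hxi hyi
      have hi' : i ≤ n := le_of_lt hsi
      have hin : i < n := hsi
      -- head values
      have hcC : per (C.rotate (n - (i+1))) 0 = C.getD (n-1-i) 1 := by
        rw [per_rotate _ _ _ hCn, hC]
        congr 1
        rw [Nat.zero_add, Nat.mod_eq_of_lt (by omega)]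
        omega
      have hcD : per (D.rotate (n - (i+1))) 0 = D.getD (n-1-i) 1 := by
        rw [per_rotate _ _ _ hDn, hD]
        congr 1
        rw [Nat.zero_add, Nat.mod_eq_of_lt (by omega)]
        omega
      have hcCD : per (D.rotate (n - (i+1))) 0 = per (C.rotate (n - (i+1))) 0 := by
        rw [hcC, hcD, hm i (Nat.lt_succ_self i)]
      -- tails
      have htailC : (fun k => per (C.rotate (n - (i+1))) (k+1)) = per (C.rotate (n-i)) := by
        funext k
        rw [per_rotate _ _ _ hCn, per_rotate _ _ _ hCn]
        congr 2
        omega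
      have htailD : (fun k => per (D.rotate (n - (i+1))) (k+1)) = per (D.rotate (n-i)) := by
        funext k
        rw [per_rotate _ _ _ hDn, per_rotate _ _ _ hDn]
        congr 2
        omega
      set c : ℕ := per (C.rotate (n - (i+1))) 0 with hc
      have hv : IsCF ((xi - c)⁻¹) (per (C.rotate (n-i))) := by
        have := IsCF_tail hxi
        rwa [htailC] at this
      have hw : IsCF ((yi - c)⁻¹) (per (D.rotate (n-i))) := by
        have := IsCF_tail hyi
        rw [htailD] at this
        rwa [hcCD] at this
      have hv1 : 1 < (xi - c)⁻¹ := IsCF_one_lt hv (hCrpos _ 0)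
      have hw1 : 1 < (yi - c)⁻¹ := IsCF_one_lt hw (hDrpos _ 0)
      have hxc : 0 < xi - c := by
        by_contra h
        push_neg at h
        have : (xi - c)⁻¹ ≤ 0 := inv_nonpos.2 h
        linarith
      have hyc : 0 < yi - c := by
        by_contra h
        push_neg at h
        have : (yi - c)⁻¹ ≤ 0 := inv_nonpos.2 h
        linarith
      obtain ⟨ih1, ih2⟩ := ih hi' (fun j hj => hm j (Nat.lt_succ_of_lt hj))
        _ _ hv hw
      constructor
      · intro he
        have ho : ¬ Even i := by
          rwa [Nat.even_add_one] at he
        have h1 := ih2 ho  -- (yi - c)⁻¹ < (xi - c)⁻¹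
        have h2 := inv_strictAnti₀ (by positivity) h1
        rw [inv_inv, inv_inv] at h2
        linarith
      · intro ho
        have he : Even i := by
          rw [Nat.even_add_one, not_not] at ho
          exact ho
        have h1 := ih1 he  -- (xi - c)⁻¹ < (yi - c)⁻¹
        have h2 := inv_strictAnti₀ (by positivity) h1
        rw [inv_inv, inv_inv] at h2
        linarith
  exact key i hi hmatch xi yi hxi hyi
end

section
/- Let u < v be two Markov irrationalities that are neighbors in the Markov tree. Then the back matching of u and v equals ℓ(v) − 2 and the front matching of u and v equals ℓ(u) − 2, where ℓ(w) denotes the minimal even period length of the purely periodic continued fraction expansion of w. -/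
/-- One insertion step on a level of the Markov tree: between neighbors
`w₁ < w₂` (with periods `A`, `B`) insert `w₂ ⊙ w₁`, whose period is `B ++ A`. -/
def markovInsert : List (List ℕ) → List (List ℕ)
  | x :: y :: rest => x :: (y ++ x) :: markovInsert (y :: rest)
  | l => l

/-- The `n`-th level of the Markov tree, each Markov irrationality represented
by (the minimal even period of) its purely periodic continued fraction,
starting from `φ = [overline{1;1}]` and `ψ = [overline{2;2}]`. -/
def markovLevel : ℕ → List (List ℕ)
  | 0 => [[1, 1], [2, 2]]
  | n + 1 => markovInsert (markovLevel n)

/-- The `j`-th partial quotient of the period `L`, read cyclically backwards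
from the end of the period. -/
def backAt (L : List ℕ) (j : ℕ) : ℕ := L.getD (L.length - 1 - j % L.length) 1

/-- The `j`-th partial quotient of the period `L`, read cyclically forwards
from the beginning of the period. -/
def frontAt (L : List ℕ) (j : ℕ) : ℕ := L.getD (j % L.length) 1

namespace MarkovAux

lemma backAt_period (L : List ℕ) (j : ℕ) : backAt L (j + L.length) = backAt L j := by
  unfold backAt
  rw [Nat.add_mod_right]

lemma frontAt_period (L : List ℕ) (j : ℕ) : frontAt L (j + L.length) = frontAt L j := by
  unfold frontAt
  rw [Nat.add_mod_right]

lemma backAt_append_lo (a b : List ℕ) {j : ℕ} (hj : j < a.length) :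
    backAt (b ++ a) j = backAt a j := by
  unfold backAt
  rw [List.length_append, Nat.mod_eq_of_lt (by omega), Nat.mod_eq_of_lt hj,
    List.getD_append_right b a 1 _ (by omega)]
  congr 1
  omega

lemma backAt_append_hi (a b : List ℕ) {j : ℕ} (h1 : a.length ≤ j)
    (h2 : j < a.length + b.length) : backAt (b ++ a) j = backAt b (j - a.length) := by
  unfold backAt
  rw [List.length_append, Nat.mod_eq_of_lt (by omega), Nat.mod_eq_of_lt (by omega),
    List.getD_append b a 1 _ (by omega)]
  congr 1
  omega

lemma frontAt_append_lo (a b : List ℕ) {j : ℕ} (hj : j < b.length) :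
    frontAt (b ++ a) j = frontAt b j := by
  unfold frontAt
  rw [List.length_append, Nat.mod_eq_of_lt (by omega), Nat.mod_eq_of_lt hj,
    List.getD_append b a 1 _ (by omega)]

lemma frontAt_append_hi (a b : List ℕ) {j : ℕ} (h1 : b.length ≤ j)
    (h2 : j < b.length + a.length) : frontAt (b ++ a) j = frontAt a (j - b.length) := by
  unfold frontAt
  rw [List.length_append, Nat.mod_eq_of_lt (by omega), Nat.mod_eq_of_lt (by omega),
    List.getD_append_right b a 1 _ (by omega)]

/-- The invariant carried for consecutive pairs in a Markov level. -/
def MP (a b : List ℕ) : Prop :=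
  2 ≤ a.length ∧ 2 ≤ b.length ∧
    (∀ j < b.length - 2, backAt a j = backAt b j) ∧
    backAt a (b.length - 2) ≠ backAt b (b.length - 2) ∧
    (∀ j < a.length - 2, frontAt a j = frontAt b j) ∧
    frontAt a (a.length - 2) ≠ frontAt b (a.length - 2)

lemma MP_left {a b : List ℕ} (h : MP a b) : MP a (b ++ a) := by
  obtain ⟨ha, hb, hB, hBd, hF, hFd⟩ := h
  have hlen : (b ++ a).length = b.length + a.length := List.length_append
  refine ⟨ha, by omega, ?_, ?_, ?_, ?_⟩
  · intro j hj
    rw [hlen] at hj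
    rcases lt_or_ge j a.length with h | h
    · rw [backAt_append_lo a b h]
    · rw [backAt_append_hi a b h (by omega)]
      have : backAt a (j - a.length) = backAt b (j - a.length) := hB _ (by omega)
      have hp : backAt a ((j - a.length) + a.length) = backAt a (j - a.length) :=
        backAt_period a _
      rw [show j = (j - a.length) + a.length by omega, hp, this]
      congr 1
      omega
  · rw [hlen]
    have h1 : a.length ≤ b.length + a.length - 2 := by omega
    rw [backAt_append_hi a b h1 (by omega)]
    have he : b.length + a.length - 2 - a.length = b.length - 2 := by omega
    rw [he]
    have hp : backAt a ((b.length - 2) + a.length) = backAt a (b.length - 2) :=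
      backAt_period a _
    rw [show b.length + a.length - 2 = (b.length - 2) + a.length by omega, hp]
    exact hBd
  · intro j hj
    rcases lt_or_ge j b.length with h | h
    · rw [frontAt_append_lo a b h]
      exact hF _ hj
    · rw [frontAt_append_hi a b h (by omega)]
      have h1 : frontAt a (j - b.length) = frontAt b (j - b.length) := hF _ (by omega)
      have hp : frontAt b ((j - b.length) + b.length) = frontAt b (j - b.length) :=
        frontAt_period b _
      rw [h1, ← hp, show j - b.length + b.length = j by omega]
      exact hF _ hj
  · rcases lt_or_ge (a.length - 2) b.length with h | h
    · rw [frontAt_append_lo a b h]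
      exact hFd
    · rw [frontAt_append_hi a b h (by omega)]
      have h1 : frontAt a (a.length - 2 - b.length) = frontAt b (a.length - 2 - b.length) :=
        hF _ (by omega)
      have hp : frontAt b ((a.length - 2 - b.length) + b.length) =
          frontAt b (a.length - 2 - b.length) := frontAt_period b _
      rw [h1, ← hp, show a.length - 2 - b.length + b.length = a.length - 2 by omega]
      exact hFd

lemma MP_right {a b : List ℕ} (h : MP a b) : MP (b ++ a) b := by
  obtain ⟨ha, hb, hB, hBd, hF, hFd⟩ := h
  have hlen : (b ++ a).length = b.length + a.length := List.length_append
  refine ⟨by omega, hb, ?_, ?_, ?_, ?_⟩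
  · intro j hj
    rcases lt_or_ge j a.length with h | h
    · rw [backAt_append_lo a b h]
      exact hB _ hj
    · rw [backAt_append_hi a b h (by omega)]
      have h1 : backAt a (j - a.length) = backAt b (j - a.length) := hB _ (by omega)
      have hp : backAt a ((j - a.length) + a.length) = backAt a (j - a.length) :=
        backAt_period a _
      rw [← h1, ← hp, show j - a.length + a.length = j by omega]
      exact hB _ hj
  · rcases lt_or_ge (b.length - 2) a.length with h | h
    · rw [backAt_append_lo a b h]
      exact hBd
    · rw [backAt_append_hi a b h (by omega)]
      have h1 : backAt a (b.length - 2 - a.length) = backAt b (b.length - 2 - a.length) :=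
        hB _ (by omega)
      have hp : backAt a ((b.length - 2 - a.length) + a.length) =
          backAt a (b.length - 2 - a.length) := backAt_period a _
      rw [← h1, ← hp, show b.length - 2 - a.length + a.length = b.length - 2 by omega]
      exact hBd
  · intro j hj
    rw [hlen] at hj
    rcases lt_or_ge j b.length with h | h
    · rw [frontAt_append_lo a b h]
    · rw [frontAt_append_hi a b h (by omega)]
      have h1 : frontAt a (j - b.length) = frontAt b (j - b.length) := hF _ (by omega)
      have hp : frontAt b ((j - b.length) + b.length) = frontAt b (j - b.length) :=
        frontAt_period b _
      rw [h1, ← hp, show j - b.length + b.length = j by omega]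
  · rw [hlen]
    have h1 : b.length ≤ b.length + a.length - 2 := by omega
    rw [frontAt_append_hi a b h1 (by omega)]
    have he : b.length + a.length - 2 - b.length = a.length - 2 := by omega
    rw [he]
    have hp : frontAt b ((a.length - 2) + b.length) = frontAt b (a.length - 2) :=
      frontAt_period b _
    rw [show b.length + a.length - 2 = (a.length - 2) + b.length by omega, hp]
    exact hFd

lemma chain_insert : ∀ l : List (List ℕ), List.Chain' MP l → List.Chain' MP (markovInsert l)
  | [], h => h
  | [x], h => h
  | x :: y :: rest, h => by
    rw [List.Chain', List.isChain_cons_cons] at h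
    obtain ⟨hxy, hrest⟩ := h
    have ih := chain_insert (y :: rest) hrest
    show List.IsChain MP (x :: (y ++ x) :: markovInsert (y :: rest))
    have hhd : (markovInsert (y :: rest)).head? = some y := by
      cases rest with
      | nil => rfl
      | cons r rs => rfl
    have hhead : ∀ z ∈ (markovInsert (y :: rest)).head?, MP (y ++ x) z := by
      intro z hz
      rw [hhd] at hz
      simp only [Option.mem_def, Option.some.injEq] at hz
      subst hz
      exact MP_right hxy
    rw [List.isChain_cons]
    refine ⟨?_, ?_⟩
    · intro z hz
      simp only [List.head?_cons, Option.mem_def, Option.some.injEq] at hz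
      subst hz
      exact MP_left hxy
    · rw [List.isChain_cons]
      exact ⟨hhead, ih⟩

lemma chain_level (n : ℕ) : List.Chain' MP (markovLevel n) := by
  induction n with
  | zero =>
    refine List.isChain_cons_cons.mpr ⟨?_, List.isChain_singleton _⟩
    refine ⟨by decide, by decide, ?_, by decide, ?_, by decide⟩
    · intro j hj; simp at hj
    · intro j hj; simp at hj
  | succ n ih => exact chain_insert _ ih

end MarkovAux

/-- If `u < v` are neighboring Markov irrationalities (consecutive in some
level of the Markov tree, represented by their periods), then their back
matching equals `ℓ(v) − 2` and their front matching equals `ℓ(u) − 2`. -/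
theorem markov_neighbors_matching (n i : ℕ) (u v : List ℕ)
    (hu : (markovLevel n)[i]? = some u) (hv : (markovLevel n)[i + 1]? = some v) :
    ((∀ j < v.length - 2, backAt u j = backAt v j) ∧
      backAt u (v.length - 2) ≠ backAt v (v.length - 2)) ∧
    ((∀ j < u.length - 2, frontAt u j = frontAt v j) ∧
      frontAt u (u.length - 2) ≠ frontAt v (u.length - 2)) := by
  obtain ⟨h1, hu'⟩ := List.getElem?_eq_some_iff.mp hu
  obtain ⟨h2, hv'⟩ := List.getElem?_eq_some_iff.mp hv
  have hc := MarkovAux.chain_level n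
  rw [List.Chain', List.isChain_iff_getElem] at hc
  have := hc i (by omega)
  rw [hu', hv'] at this
  obtain ⟨_, _, hB, hBd, hF, hFd⟩ := this
  exact ⟨⟨hB, hBd⟩, ⟨hF, hFd⟩⟩
end

section
/- Let a < b be rational numbers and G : [a,b] ∩ ℚ → ℝ a convex function having a global maximum at a and a global minimum at b. Then G extends uniquely to a function on [a,b] that is continuous on (a,b], convex and non-increasing on [a,b]. If moreover G(xₙ) → G(a) for some sequence (xₙ) in (a,b] ∩ ℚ with xₙ → a, then the extension is continuous on all of [a,b]. -/
open Set Filter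

section Aux
variable (a b : ℚ) (G : ℚ → ℝ)

/-- The set of values of `G` at rationals in `[max x a, b]`. -/
def MySet (x : ℝ) : Set ℝ :=
  (fun q : ℚ => G q) '' {q : ℚ | (a:ℝ) ≤ (q:ℝ) ∧ x ≤ (q:ℝ) ∧ (q:ℝ) ≤ (b:ℝ)}

noncomputable def MyExt (x : ℝ) : ℝ := sSup (MySet a b G x)

variable (hab : a < b)
  (hconv : ∀ x y z : ℚ, x ∈ Set.Icc a b → y ∈ Set.Icc a b → z ∈ Set.Icc a b →
      x ≤ y → y ≤ z → x ≠ z →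
      G y ≤ (((z - y) / (z - x) : ℚ) : ℝ) * G x + (((y - x) / (z - x) : ℚ) : ℝ) * G z)
  (hmax : ∀ q ∈ Set.Icc a b, G q ≤ G a)
  (hmin : ∀ q ∈ Set.Icc a b, G b ≤ G q)

include hconv hmin in
lemma G_anti : ∀ p q : ℚ, p ∈ Set.Icc a b → q ∈ Set.Icc a b → p ≤ q → G q ≤ G p := by
  intro p q hp hq hpq
  rcases eq_or_lt_of_le hpq with rfl | hlt
  · exact le_refl _
  have hpb : p ≠ b := fun h => absurd (h ▸ hq.2) (not_le.2 (h ▸ hlt))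
  have hpb' : p < b := lt_of_le_of_ne hp.2 hpb
  have key := hconv p q b hp hq ⟨le_trans hp.1 hp.2, le_refl b⟩ hpq hq.2 hpb
  have h1 : (0:ℝ) ≤ (((b - q)/(b - p) : ℚ) : ℝ) := by
    have : (0:ℚ) ≤ (b - q)/(b - p) := div_nonneg (by linarith [hq.2]) (by linarith)
    exact_mod_cast this
  have h2 : (0:ℝ) ≤ (((q - p)/(b - p) : ℚ) : ℝ) := by
    have : (0:ℚ) ≤ (q - p)/(b - p) := div_nonneg (by linarith) (by linarith)
    exact_mod_cast this
  have h3 : (((b - q)/(b - p) : ℚ) : ℝ) + (((q - p)/(b - p) : ℚ) : ℝ) = 1 := by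
    have : (b - q)/(b - p) + (q - p)/(b - p) = (1:ℚ) := by
      rw [← add_div, show b - q + (q - p) = b - p by ring,
        div_self (by linarith : b - p ≠ 0)]
    exact_mod_cast this
  have hGb := hmin p hp
  have h4 : (((q - p)/(b - p) : ℚ) : ℝ) * G b ≤ (((q - p)/(b - p) : ℚ) : ℝ) * G p :=
    mul_le_mul_of_nonneg_left hGb h2
  have h5 : (((b - q)/(b - p) : ℚ) : ℝ) * G p + (((q - p)/(b - p) : ℚ) : ℝ) * G p = G p := by
    rw [← add_mul, h3, one_mul]
  linarith


variable (hanti : ∀ p q : ℚ, p ∈ Set.Icc a b → q ∈ Set.Icc a b → p ≤ q → G q ≤ G p)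

include hmax in
lemma MySet_bdd (x : ℝ) : BddAbove (MySet a b G x) := by
  refine ⟨G a, ?_⟩
  rintro y ⟨q, ⟨hq1, _, hq3⟩, rfl⟩
  exact hmax q ⟨by exact_mod_cast hq1, by exact_mod_cast hq3⟩

include hab in
lemma MySet_nonempty {x : ℝ} (hx : x ≤ (b:ℝ)) : (MySet a b G x).Nonempty :=
  ⟨G b, b, ⟨by exact_mod_cast hab.le, hx, le_refl _⟩, rfl⟩

include hab hmax hanti in
lemma MyExt_rat (q : ℚ) (hq : q ∈ Set.Icc a b) : MyExt a b G (q:ℝ) = G q := by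
  refine le_antisymm (csSup_le (MySet_nonempty a b G hab (by exact_mod_cast hq.2)) ?_)
    (le_csSup (MySet_bdd a b G hmax _) ⟨q, ⟨by exact_mod_cast hq.1, le_refl _, by exact_mod_cast hq.2⟩, rfl⟩)
  rintro y ⟨r, ⟨hr1, hr2, hr3⟩, rfl⟩
  exact hanti q r hq ⟨by exact_mod_cast hr1, by exact_mod_cast hr3⟩ (by exact_mod_cast hr2)

include hab hmax in
lemma MyExt_anti : AntitoneOn (MyExt a b G) (Set.Icc (a:ℝ) b) := by
  intro x hx y hy hxy
  apply csSup_le_csSup (MySet_bdd a b G hmax x) (MySet_nonempty a b G hab hy.2)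
  rintro v ⟨q, ⟨hq1, hq2, hq3⟩, rfl⟩
  exact ⟨q, ⟨hq1, le_trans hxy hq2, hq3⟩, rfl⟩

include hmax in
lemma le_MyExt {x : ℝ} (q : ℚ) (hq1 : (a:ℝ) ≤ q) (hq2 : x ≤ (q:ℝ)) (hq3 : (q:ℝ) ≤ b) :
    G q ≤ MyExt a b G x :=
  le_csSup (MySet_bdd a b G hmax x) ⟨q, ⟨hq1, hq2, hq3⟩, rfl⟩



end Aux


set_option maxHeartbeats 1000000 in
lemma chord_arith (x z q p r δ ε c Hx Hz Gp Gq Gr : ℝ)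
    (hxq : x < q) (hqz : q < z)
    (hp1 : x < p) (hp2 : p < q) (hp3 : p < x + δ)
    (hr1 : z ≤ r) (hr2 : r < z + δ)
    (hδ0 : 0 < δ) (hδ1 : 2*δ ≤ z - x) (hδ2 : 2*δ*(1+c) ≤ ε*(z-x))
    (hc : 0 ≤ c) (hε : 0 < ε)
    (hchord : Gq ≤ (r-q)/(r-p) * Gp + (q-p)/(r-p) * Gr)
    (hGp : Gp ≤ Hx) (hGr : Gr ≤ Hz) (hHc : Hx - Hz = c) :
    Gq ≤ (z-q)/(z-x) * Hx + (1 - (z-q)/(z-x)) * Hz + ε := by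
  have hD : (0:ℝ) < z - x := by linarith
  have hrp : (0:ℝ) < r - p := by linarith
  set lam := (r-q)/(r-p) with hlam
  set mu := (q-p)/(r-p) with hmu
  set sig := (z-q)/(z-x) with hsig
  have hlam0 : 0 ≤ lam := div_nonneg (by linarith) hrp.le
  have hmu0 : 0 ≤ mu := div_nonneg (by linarith) hrp.le
  have hlammu : lam + mu = 1 := by
    rw [hlam, hmu, ← add_div, show r - q + (q - p) = r - p by ring,
      div_self hrp.ne']
  -- key bound on lam
  have e1 : (r-z)*(q-x) ≤ δ*(q-x) := mul_le_mul_of_nonneg_right (by linarith) (by linarith)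
  have e2 : (p-x)*(z-q) ≤ δ*(z-q) := mul_le_mul_of_nonneg_right (by linarith) (by linarith)
  have hid : (r-q)*(z-x) - (z-q)*(r-p) = (r-z)*(q-x) + (p-x)*(z-q) := by ring
  have h6 : (r - q - δ) * (z-x) ≤ (z-q)*(r-p) := by nlinarith [e1, e2, hid]
  have h7 : r - q - δ ≤ sig*(r-p) := by
    rw [hsig, show (z-q)/(z-x)*(r-p) = (z-q)*(r-p)/(z-x) by ring, le_div_iff₀ hD]
    exact h6
  have hlamsig : lam ≤ sig + δ/(r-p) := by
    have h8 : lam * (r-p) = r - q := div_mul_cancel₀ _ hrp.ne'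
    have h9 : lam * (r-p) ≤ (sig + δ/(r-p))*(r-p) := by
      rw [h8, add_mul, div_mul_cancel₀ _ hrp.ne']
      linarith
    exact le_of_mul_le_mul_right h9 hrp
  have hδrp : δ/(r-p) ≤ ε/(1+c) := by
    rw [div_le_div_iff₀ hrp (by linarith : (0:ℝ) < 1 + c)]
    nlinarith [hδ2, hδ1, hε, hc]
  have hlamsig2 : lam ≤ sig + ε/(1+c) := by linarith
  -- combine
  have hchain1 : lam*Gp ≤ lam*Hx := mul_le_mul_of_nonneg_left hGp hlam0
  have hchain2 : mu*Gr ≤ mu*Hz := mul_le_mul_of_nonneg_left hGr hmu0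
  have eq1 : lam*Hx + mu*Hz = Hz + lam*c := by
    rw [show mu = 1 - lam from by linarith, ← hHc]; ring
  have eq2 : sig * Hx + (1-sig)*Hz = Hz + sig*c := by rw [← hHc]; ring
  have h10 : (ε/(1+c))*c ≤ ε := by
    rw [div_mul_eq_mul_div, div_le_iff₀ (by linarith : (0:ℝ) < 1 + c)]
    nlinarith
  have h11 : lam*c ≤ sig*c + ε := by
    have h12 := mul_le_mul_of_nonneg_right hlamsig2 hc
    have h13 : (sig + ε/(1+c))*c = sig*c + (ε/(1+c))*c := by ring
    linarith
  linarith [hchord, hchain1, hchain2]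

section Aux3
variable (a b : ℚ) (G : ℚ → ℝ)
variable (hab : a < b)
  (hconv : ∀ x y z : ℚ, x ∈ Set.Icc a b → y ∈ Set.Icc a b → z ∈ Set.Icc a b →
      x ≤ y → y ≤ z → x ≠ z →
      G y ≤ (((z - y) / (z - x) : ℚ) : ℝ) * G x + (((y - x) / (z - x) : ℚ) : ℝ) * G z)
  (hmax : ∀ q ∈ Set.Icc a b, G q ≤ G a)
  (hanti : ∀ p q : ℚ, p ∈ Set.Icc a b → q ∈ Set.Icc a b → p ≤ q → G q ≤ G p)

include hab hconv hmax in
lemma MyExt_chord {x z : ℝ} (hax : (a:ℝ) ≤ x) (hxz : x < z) (hzb : z ≤ (b:ℝ))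
    (q : ℚ) (hxq : x ≤ (q:ℝ)) (hqz : (q:ℝ) < z) :
    G q ≤ (z-(q:ℝ))/(z-x) * MyExt a b G x
      + (1 - (z-(q:ℝ))/(z-x)) * MyExt a b G z := by
  rcases eq_or_lt_of_le hxq with heq | hxq'
  · have hσ : (z-(q:ℝ))/(z-x) = 1 := by
      rw [heq]; exact div_self (ne_of_gt (by linarith))
    rw [hσ]
    have h := le_MyExt a b G hmax q (heq ▸ hax) hxq (by linarith)
    linarith
  · apply le_of_forall_pos_le_add
    intro ε hε
    have hHxz : MyExt a b G z ≤ MyExt a b G x :=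
      MyExt_anti a b G hab hmax ⟨hax, by linarith⟩ ⟨by linarith, hzb⟩ hxz.le
    set c := MyExt a b G x - MyExt a b G z with hc
    have hc0 : (0:ℝ) ≤ c := by rw [hc]; linarith
    have hD : (0:ℝ) < z - x := by linarith
    obtain ⟨δ, hδ0, hδ1, hδ2⟩ : ∃ δ : ℝ, 0 < δ ∧ 2*δ ≤ z - x ∧ 2*δ*(1+c) ≤ ε*(z-x) := by
      refine ⟨min ((z-x)/2) (ε*(z-x)/(2*(1+c))), lt_min (by positivity) (by positivity),
        by linarith [min_le_left ((z-x)/2) (ε*(z-x)/(2*(1+c)))], ?_⟩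
      have h1 := min_le_right ((z-x)/2) (ε*(z-x)/(2*(1+c)))
      have h2 : (0:ℝ) ≤ 2*(1+c) := by linarith
      have h3 := mul_le_mul_of_nonneg_right h1 h2
      have h4 : (ε*(z-x)/(2*(1+c)))*(2*(1+c)) = ε*(z-x) := by field_simp
      nlinarith [h3, h4]
    obtain ⟨p, hp1, hp2⟩ := exists_rat_btwn (show x < min ((q:ℝ)) (x+δ) from
      lt_min hxq' (by linarith))
    have hpq : (p:ℝ) < q := lt_of_lt_of_le hp2 (min_le_left _ _)
    have hpδ : (p:ℝ) < x + δ := lt_of_lt_of_le hp2 (min_le_right _ _)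
    have hrex : ∃ r : ℚ, z ≤ (r:ℝ) ∧ (r:ℝ) ≤ (b:ℝ) ∧ (r:ℝ) < z + δ ∧ (q:ℝ) < r := by
      rcases eq_or_lt_of_le hzb with hzb' | hzb'
      · exact ⟨b, le_of_eq hzb', le_refl _, by rw [← hzb']; linarith, by rw [← hzb']; exact hqz⟩
      · obtain ⟨r, hr1, hr2⟩ := exists_rat_btwn (show z < min ((b:ℝ)) (z+δ) from
          lt_min hzb' (by linarith))
        exact ⟨r, hr1.le, (lt_of_lt_of_le hr2 (min_le_left _ _)).le,
          lt_of_lt_of_le hr2 (min_le_right _ _), lt_trans hqz hr1⟩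
    obtain ⟨r, hr1, hr2, hr3, hr4⟩ := hrex
    have hpa : (a:ℝ) ≤ p := le_trans hax hp1.le
    have hmem_p : p ∈ Set.Icc a b := ⟨by exact_mod_cast hpa,
      by exact_mod_cast (show (p:ℝ) ≤ (b:ℝ) by linarith)⟩
    have hmem_q : q ∈ Set.Icc a b := ⟨by exact_mod_cast (show (a:ℝ) ≤ (q:ℝ) by linarith),
      by exact_mod_cast (show (q:ℝ) ≤ (b:ℝ) by linarith)⟩
    have hmem_r : r ∈ Set.Icc a b := ⟨by exact_mod_cast (show (a:ℝ) ≤ (r:ℝ) by linarith),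
      by exact_mod_cast hr2⟩
    have hpr : p ≠ r := by
      have : (p:ℝ) < (r:ℝ) := by linarith
      have : p < r := by exact_mod_cast this
      exact ne_of_lt this
    have key := hconv p q r hmem_p hmem_q hmem_r
      (by exact_mod_cast hpq.le) (by exact_mod_cast (show (q:ℝ) ≤ (r:ℝ) from hr4.le)) hpr
    push_cast at key
    exact chord_arith x z q p r δ ε c (MyExt a b G x) (MyExt a b G z)
      (G p) (G q) (G r) hxq' hqz hp1 hpq hpδ hr1 hr3 hδ0 hδ1 hδ2 hc0 hε key
      (le_MyExt a b G hmax p hpa hp1.le (by linarith))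
      (le_MyExt a b G hmax r (by linarith) hr1 hr2)
      (by rw [hc])

include hab hconv hmax in
lemma MyExt_convex : ConvexOn ℝ (Set.Icc (a:ℝ) b) (MyExt a b G) := by
  refine ⟨convex_Icc _ _, ?_⟩
  have main : ∀ x z : ℝ, x ∈ Set.Icc (a:ℝ) b → z ∈ Set.Icc (a:ℝ) b → x ≤ z →
      ∀ s t : ℝ, 0 ≤ s → 0 ≤ t → s + t = 1 →
      MyExt a b G (s*x + t*z) ≤ s * MyExt a b G x + t * MyExt a b G z := by
    intro x z hx hz hxz s t hs ht hst
    rcases eq_or_lt_of_le hxz with rfl | hxz'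
    · rw [show s*x + t*x = x by rw [← add_mul, hst, one_mul],
        show s * MyExt a b G x + t * MyExt a b G x = MyExt a b G x by
          rw [← add_mul, hst, one_mul]]
    rcases eq_or_lt_of_le hs with hs0 | hs'
    · have ht1 : t = 1 := by linarith
      rw [← hs0, ht1]; norm_num
    rcases eq_or_lt_of_le ht with ht0 | ht'
    · have hs1 : s = 1 := by linarith
      rw [← ht0, hs1]; norm_num
    set y := s*x + t*z with hy
    have hexy : y - x = t*(z-x) := by rw [hy]; linear_combination x * hst
    have hezy : z - y = s*(z-x) := by rw [hy]; linear_combination (-z) * hst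
    have hxy : x < y := by nlinarith [mul_pos ht' (show (0:ℝ) < z - x by linarith)]
    have hyz : y < z := by nlinarith [mul_pos hs' (show (0:ℝ) < z - x by linarith)]
    have hHxz : MyExt a b G z ≤ MyExt a b G x :=
      MyExt_anti a b G hab hmax hx hz hxz
    apply csSup_le (MySet_nonempty a b G hab (by linarith [hz.2]))
    rintro v ⟨q, ⟨hq1, hq2, hq3⟩, rfl⟩
    rcases lt_or_ge (q:ℝ) z with hqz | hzq
    · have hch := MyExt_chord a b G hab hconv hmax hx.1 hxz' hz.2 q
        (le_trans hxy.le hq2) hqz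
      set σ := (z-(q:ℝ))/(z-x) with hσdef
      have hts : t = 1 - s := by linarith
      have hq2' : s*x + (1-s)*z ≤ (q:ℝ) := by rw [← hts]; exact hq2
      have hσs : σ ≤ s := by
        rw [hσdef, div_le_iff₀ (by linarith)]
        nlinarith [hq2']
      have hP : 0 ≤ (s - σ) * (MyExt a b G x - MyExt a b G z) :=
        mul_nonneg (by linarith) (by linarith)
      show G q ≤ s * MyExt a b G x + t * MyExt a b G z
      rw [hts]
      nlinarith [hch, hP]
    · have h1 : G q ≤ MyExt a b G x := le_MyExt a b G hmax q hq1 (le_trans hxy.le hq2) hq3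
      have h2 : G q ≤ MyExt a b G z := le_MyExt a b G hmax q hq1 hzq hq3
      have h3 : s*G q + t*G q = G q := by rw [← add_mul, hst, one_mul]
      show G q ≤ s * MyExt a b G x + t * MyExt a b G z
      linarith [mul_le_mul_of_nonneg_left h1 hs, mul_le_mul_of_nonneg_left h2 ht]
  intro x hx z hz s t hs ht hst
  simp only [smul_eq_mul]
  rcases le_total x z with h | h
  · exact main x z hx hz h s t hs ht hst
  · have := main z x hz hx h t s ht hs (by linarith)
    calc MyExt a b G (s*x + t*z) = MyExt a b G (t*z + s*x) := by rw [add_comm]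
    _ ≤ t * MyExt a b G z + s * MyExt a b G x := this
    _ = s * MyExt a b G x + t * MyExt a b G z := by ring

end Aux3


lemma contOn_Ioc_of_convex_anti (a b : ℚ) (H : ℝ → ℝ) (hab : a < b)
    (hconvex : ConvexOn ℝ (Set.Icc (a:ℝ) b) H)
    (hanti : AntitoneOn H (Set.Icc (a:ℝ) b)) :
    ContinuousOn H (Set.Ioc (a:ℝ) b) := by
  have hab' : (a:ℝ) < b := by exact_mod_cast hab
  intro x hx
  rcases eq_or_lt_of_le hx.2 with hxb | hxb
  · subst hxb
    obtain ⟨m, ham, hmb⟩ : ∃ m : ℝ, (a:ℝ) < m ∧ m < (b:ℝ) :=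
      ⟨((a:ℝ) + b)/2, by linarith, by linarith⟩
    have hmIcc : m ∈ Set.Icc (a:ℝ) b := ⟨ham.le, hmb.le⟩
    have hbIcc : (b:ℝ) ∈ Set.Icc (a:ℝ) b := ⟨hab'.le, le_refl _⟩
    set L : ℝ → ℝ := fun y => ((b:ℝ) - y)/((b:ℝ) - m) * H m + (y - m)/((b:ℝ) - m) * H b
      with hL
    have hLb : L (b:ℝ) = H (b:ℝ) := by
      rw [hL]; simp only
      rw [sub_self, zero_div, zero_mul, zero_add, div_self (by linarith : (b:ℝ) - m ≠ 0),
        one_mul]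
    have hupper : ∀ y : ℝ, m ≤ y → y ≤ (b:ℝ) → H y ≤ L y := by
      intro y hy1 hy2
      have hs : (0:ℝ) ≤ ((b:ℝ) - y)/((b:ℝ) - m) := div_nonneg (by linarith) (by linarith)
      have ht : (0:ℝ) ≤ (y - m)/((b:ℝ) - m) := div_nonneg (by linarith) (by linarith)
      have hst : ((b:ℝ) - y)/((b:ℝ) - m) + (y - m)/((b:ℝ) - m) = 1 := by
        rw [← add_div, show (b:ℝ) - y + (y - m) = (b:ℝ) - m by ring,
          div_self (by linarith : (b:ℝ) - m ≠ 0)]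
      have hcomb := hconvex.2 hmIcc hbIcc hs ht hst
      have heq : (((b:ℝ) - y)/((b:ℝ) - m)) • m + ((y - m)/((b:ℝ) - m)) • (b:ℝ) = y := by
        have hbm : (b:ℝ) - m ≠ 0 := by linarith
        simp only [smul_eq_mul]
        field_simp
        ring
      rw [heq] at hcomb
      exact hcomb
    have hLcont : Tendsto L (nhdsWithin (b:ℝ) (Set.Ioc (a:ℝ) b)) (nhds (H (b:ℝ))) := by
      rw [← hLb]
      apply Tendsto.mono_left _ nhdsWithin_le_nhds
      apply Continuous.tendsto
      rw [hL]
      fun_prop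
    have hev1 : ∀ᶠ y in nhdsWithin (b:ℝ) (Set.Ioc (a:ℝ) b), H (b:ℝ) ≤ H y := by
      filter_upwards [self_mem_nhdsWithin] with y hy
      exact hanti ⟨hy.1.le, hy.2⟩ hbIcc hy.2
    have hev2 : ∀ᶠ y in nhdsWithin (b:ℝ) (Set.Ioc (a:ℝ) b), H y ≤ L y := by
      filter_upwards [self_mem_nhdsWithin,
        mem_nhdsWithin_of_mem_nhds (Ioi_mem_nhds hmb)] with y hy1 hy2
      exact hupper y (le_of_lt hy2) hy1.2
    exact tendsto_of_tendsto_of_tendsto_of_le_of_le' tendsto_const_nhds hLcont hev1 hev2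
  · have hcont := hconvex.continuousOn_interior
    rw [interior_Icc] at hcont
    have hx' : x ∈ Set.Ioo (a:ℝ) b := ⟨hx.1, hxb⟩
    exact ((hcont x hx').continuousAt (Ioo_mem_nhds hx'.1 hx'.2)).continuousWithinAt


lemma good_ext_unique (a b : ℚ) (G : ℚ → ℝ) (hab : a < b) (H₁ H₂ : ℝ → ℝ)
    (h₁a : ∀ q : ℚ, q ∈ Set.Icc a b → H₁ q = G q)
    (h₁c : ContinuousOn H₁ (Set.Ioc (a : ℝ) b))
    (h₂a : ∀ q : ℚ, q ∈ Set.Icc a b → H₂ q = G q)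
    (h₂c : ContinuousOn H₂ (Set.Ioc (a : ℝ) b)) :
    Set.EqOn H₁ H₂ (Set.Icc (a : ℝ) b) := by
  have hab' : (a:ℝ) < b := by exact_mod_cast hab
  intro x hx
  rcases eq_or_lt_of_le hx.1 with hax | hax
  · rw [← hax, h₁a a ⟨le_refl _, hab.le⟩, h₂a a ⟨le_refl _, hab.le⟩]
  · have hqseq : ∀ n : ℕ, ∃ q : ℚ, max (a:ℝ) (x - 1/(n+1)) < q ∧ (q:ℝ) < x := by
      intro n
      apply exists_rat_btwn
      apply max_lt hax
      have : (0:ℝ) < 1/(n+1) := by positivity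
      linarith
    choose qs hqs1 hqs2 using hqseq
    have hmemR : ∀ n, (qs n : ℝ) ∈ Set.Ioc (a:ℝ) b := fun n =>
      ⟨lt_of_le_of_lt (le_max_left _ _) (hqs1 n), le_trans (hqs2 n).le hx.2⟩
    have hmemQ : ∀ n, qs n ∈ Set.Icc a b := fun n =>
      ⟨by exact_mod_cast (hmemR n).1.le, by exact_mod_cast (hmemR n).2⟩
    have hlow : Tendsto (fun n : ℕ => max (a:ℝ) (x - 1/(n+1))) atTop (nhds (max (a:ℝ) x)) := by
      apply Tendsto.max tendsto_const_nhds
      have h0 : Tendsto (fun n : ℕ => (1:ℝ)/(n+1)) atTop (nhds 0) :=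
        tendsto_one_div_add_atTop_nhds_zero_nat
      have h1 : Tendsto (fun _ : ℕ => x) atTop (nhds x) := tendsto_const_nhds
      simpa using h1.sub h0
    rw [max_eq_right hax.le] at hlow
    have h1 : Tendsto (fun n => ((qs n : ℝ))) atTop (nhds x) :=
      tendsto_of_tendsto_of_tendsto_of_le_of_le hlow tendsto_const_nhds
        (fun n => (hqs1 n).le) (fun n => (hqs2 n).le)
    have h2 : Tendsto (fun n => ((qs n : ℝ))) atTop (nhdsWithin x (Set.Ioc (a:ℝ) b)) :=
      tendsto_nhdsWithin_of_tendsto_nhds_of_eventually_within _ h1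
        (Eventually.of_forall hmemR)
    have hc₁ : Tendsto (fun n => H₁ (qs n)) atTop (nhds (H₁ x)) :=
      ((h₁c x ⟨hax, hx.2⟩).tendsto).comp h2
    have hc₂ : Tendsto (fun n => H₂ (qs n)) atTop (nhds (H₂ x)) :=
      ((h₂c x ⟨hax, hx.2⟩).tendsto).comp h2
    have hc₂' : Tendsto (fun n => H₁ (qs n)) atTop (nhds (H₂ x)) :=
      hc₂.congr (fun n => by rw [h₂a (qs n) (hmemQ n), ← h₁a (qs n) (hmemQ n)])
    exact tendsto_nhds_unique hc₁ hc₂'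


lemma cont_Icc_of_seq (a b : ℚ) (G : ℚ → ℝ) (hab : a < b) (H : ℝ → ℝ)
    (hagr : ∀ q : ℚ, q ∈ Set.Icc a b → H q = G q)
    (hcont : ContinuousOn H (Set.Ioc (a : ℝ) b))
    (hanti : AntitoneOn H (Set.Icc (a : ℝ) b))
    (xs : ℕ → ℚ) (hxs : ∀ n, xs n ∈ Set.Ioc a b)
    (hxsG : Tendsto (fun n => G (xs n)) atTop (nhds (G a))) :
    ContinuousOn H (Set.Icc (a : ℝ) b) := by
  have hab' : (a:ℝ) < b := by exact_mod_cast hab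
  intro x hx
  rcases eq_or_lt_of_le hx.1 with hax | hax
  · -- x = a
    subst hax
    have hHa : H ((a:ℝ)) = G a := hagr a ⟨le_refl _, hab.le⟩
    show Tendsto H (nhdsWithin (a:ℝ) (Set.Icc (a:ℝ) b)) (nhds (H (a:ℝ)))
    rw [hHa]
    rw [tendsto_order]
    constructor
    · intro v hv
      obtain ⟨n, hn⟩ : ∃ n, v < G (xs n) := ((tendsto_order.1 hxsG).1 v hv).exists
      have hxsn : (xs n : ℝ) ∈ Set.Ioc (a:ℝ) b := by
        constructor
        · exact_mod_cast (hxs n).1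
        · exact_mod_cast (hxs n).2
      filter_upwards [self_mem_nhdsWithin,
        mem_nhdsWithin_of_mem_nhds (Iio_mem_nhds hxsn.1)] with y hy1 hy2
      have h1 : H (xs n) ≤ H y :=
        hanti hy1 ⟨hxsn.1.le, hxsn.2⟩ hy2.le
      have h2 : H (xs n) = G (xs n) := hagr (xs n) ⟨(hxs n).1.le, (hxs n).2⟩
      linarith
    · intro v hv
      filter_upwards [self_mem_nhdsWithin] with y hy
      have h1 : H y ≤ H ((a:ℝ)) := hanti ⟨le_refl _, hab'.le⟩ hy hy.1
      linarith
  · have h1 := hcont x ⟨hax, hx.2⟩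
    apply h1.mono_of_mem_nhdsWithin
    have h2 : Set.Icc (a:ℝ) b ∩ Set.Ioi (a:ℝ) ∈ nhdsWithin x (Set.Icc (a:ℝ) b) :=
      inter_mem_nhdsWithin _ (Ioi_mem_nhds hax)
    have h3 : Set.Icc (a:ℝ) b ∩ Set.Ioi (a:ℝ) = Set.Ioc (a:ℝ) b := by
      ext y; simp only [Set.mem_inter_iff, Set.mem_Icc, Set.mem_Ioi, Set.mem_Ioc]
      constructor
      · rintro ⟨⟨_, h⟩, h'⟩; exact ⟨h', h⟩
      · rintro ⟨h, h'⟩; exact ⟨⟨le_of_lt h, h'⟩, h⟩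
    rwa [h3] at h2


/-- `IsGoodExtension a b G H` : `H : ℝ → ℝ` agrees with `G` on `[a,b] ∩ ℚ`, is
continuous on `(a,b]`, and is convex and non-increasing on `[a,b]`. -/
def IsGoodExtension (a b : ℚ) (G : ℚ → ℝ) (H : ℝ → ℝ) : Prop :=
  (∀ q : ℚ, q ∈ Set.Icc a b → H q = G q) ∧
  ContinuousOn H (Set.Ioc (a : ℝ) b) ∧
  ConvexOn ℝ (Set.Icc (a : ℝ) b) H ∧
  AntitoneOn H (Set.Icc (a : ℝ) b)

/-- A convex function `G` on `[a,b] ∩ ℚ` with global maximum at `a` and global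
minimum at `b` extends uniquely to a function on `[a,b]` continuous on `(a,b]`,
convex and non-increasing on `[a,b]`. If moreover `G(xₙ) → G(a)` along some
rational sequence `xₙ → a` in `(a,b]`, then the extension is continuous on all
of `[a,b]`. -/
theorem convex_rational_extension (a b : ℚ) (hab : a < b) (G : ℚ → ℝ)
    (hconv : ∀ x y z : ℚ, x ∈ Set.Icc a b → y ∈ Set.Icc a b → z ∈ Set.Icc a b →
      x ≤ y → y ≤ z → x ≠ z →
      G y ≤ (((z - y) / (z - x) : ℚ) : ℝ) * G x + (((y - x) / (z - x) : ℚ) : ℝ) * G z)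
    (hmax : ∀ q ∈ Set.Icc a b, G q ≤ G a)
    (hmin : ∀ q ∈ Set.Icc a b, G b ≤ G q) :
    ∃ H : ℝ → ℝ, IsGoodExtension a b G H ∧
      (∀ H' : ℝ → ℝ, IsGoodExtension a b G H' → Set.EqOn H' H (Set.Icc (a : ℝ) b)) ∧
      ((∃ xs : ℕ → ℚ, (∀ n, xs n ∈ Set.Ioc a b) ∧
          Tendsto (fun n => ((xs n : ℝ))) atTop (nhds (a : ℝ)) ∧
          Tendsto (fun n => G (xs n)) atTop (nhds (G a))) →
        ContinuousOn H (Set.Icc (a : ℝ) b)) := by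
  have hanti := G_anti a b G hconv hmin
  have hagr : ∀ q : ℚ, q ∈ Set.Icc a b → MyExt a b G q = G q :=
    fun q hq => MyExt_rat a b G hab hmax hanti q hq
  have hcv := MyExt_convex a b G hab hconv hmax
  have han := MyExt_anti a b G hab hmax
  have hct := contOn_Ioc_of_convex_anti a b (MyExt a b G) hab hcv han
  refine ⟨MyExt a b G, ⟨hagr, hct, hcv, han⟩, ?_, ?_⟩
  · intro H' hH'
    exact good_ext_unique a b G hab H' (MyExt a b G) hH'.1 hH'.2.1 hagr hct
  · rintro ⟨xs, hxs, _, hxsG⟩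
    exact cont_Icc_of_seq a b G hab (MyExt a b G) hagr hct han xs hxs hxsG
end
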